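/- If G is a vertical geodesic of S² × ℝ and G' is a slant geodesic of S² × ℝ, then the intersection G ∩ G' is either empty or infinite. -/

import Mathlib

open scoped RealInnerProductSpace

/-- Euclidean 3-space. -/
abbrev E3 : Type := EuclideanSpace ℝ (Fin 3)

/-- The unit sphere `S² ⊆ ℝ³`. -/
abbrev S2 : Type := Metric.sphere (0 : E3) 1

/-- A geodesic of `S² × ℝ`: a set of the form
`{(cos(α t) • u + sin(α t) • v, β t + c) | t ∈ ℝ}` where `u, v ∈ S²` are orthogonal,
`c ∈ ℝ`, and `(α, β) ≠ (0, 0)`. -/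
def IsSphGeodesic (G : Set (S2 × ℝ)) : Prop :=
  ∃ (u v : S2) (α β c : ℝ), ⟪(u : E3), (v : E3)⟫ = 0 ∧ (α, β) ≠ ((0 : ℝ), (0 : ℝ)) ∧
    G = {q : S2 × ℝ | ∃ t : ℝ,
      (q.1 : E3) = Real.cos (α * t) • (u : E3) + Real.sin (α * t) • (v : E3) ∧
      q.2 = β * t + c}

/-- A geodesic of `S² × ℝ` is horizontal if it is contained in `S² × {r}` for some `r`. -/
def IsHorizontalSphGeodesic (G : Set (S2 × ℝ)) : Prop :=
  IsSphGeodesic G ∧ ∃ r : ℝ, G ⊆ {q : S2 × ℝ | q.2 = r}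

/-- A geodesic of `S² × ℝ` is vertical if it equals `{p} × ℝ` for some `p ∈ S²`. -/
def IsVerticalSphGeodesic (G : Set (S2 × ℝ)) : Prop :=
  IsSphGeodesic G ∧ ∃ p : S2, G = {q : S2 × ℝ | q.1 = p}

/-- A geodesic of `S² × ℝ` is slant if it is neither horizontal nor vertical. -/
def IsSlantSphGeodesic (G : Set (S2 × ℝ)) : Prop :=
  IsSphGeodesic G ∧ ¬ IsHorizontalSphGeodesic G ∧ ¬ IsVerticalSphGeodesic G

/-! A slant geodesic is invariant under the vertical translation by `2πβ/α`, which moves it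
one full turn around `S²`, and so is every vertical geodesic. A nonempty subset of `X × ℝ`
invariant under a nonzero vertical translation is infinite. -/

theorem Set.eq_empty_or_infinite_of_forall_mem_add_snd {X : Type*} (S : Set (X × ℝ)) {T : ℝ}
    (hT : T ≠ 0) (hS : ∀ q ∈ S, (q.1, q.2 + T) ∈ S) : S = ∅ ∨ S.Infinite := by
  refine S.eq_empty_or_nonempty.imp id fun ⟨q, hq⟩ => ?_
  have hmem : ∀ n : ℕ, (q.1, q.2 + n * T) ∈ S := by
    intro n
    induction n with
    | zero => simpa using hq
    | succ n ih => simpa [add_mul, add_assoc] using hS _ ih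
  refine Set.infinite_of_injective_forall_mem (fun m n h => ?_) hmem
  simp only [Prod.mk.injEq, true_and, add_right_inj] at h
  exact_mod_cast mul_right_cancel₀ hT h

def sphGeodesicSet (u v : S2) (α β c : ℝ) : Set (S2 × ℝ) :=
  {q : S2 × ℝ | ∃ t : ℝ,
    (q.1 : E3) = Real.cos (α * t) • (u : E3) + Real.sin (α * t) • (v : E3) ∧ q.2 = β * t + c}

theorem isHorizontalSphGeodesic_sphGeodesicSet_zero {u v : S2} {α : ℝ} (c : ℝ)
    (huv : ⟪(u : E3), (v : E3)⟫ = 0) (hα : α ≠ 0) :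
    IsHorizontalSphGeodesic (sphGeodesicSet u v α 0 c) := by
  refine ⟨⟨u, v, α, 0, c, huv, by simp [hα], rfl⟩, c, ?_⟩
  rintro q ⟨t, -, ht⟩
  simpa using ht

theorem isVerticalSphGeodesic_sphGeodesicSet_zero {u v : S2} {β : ℝ} (c : ℝ)
    (huv : ⟪(u : E3), (v : E3)⟫ = 0) (hβ : β ≠ 0) :
    IsVerticalSphGeodesic (sphGeodesicSet u v 0 β c) := by
  refine ⟨⟨u, v, 0, β, c, huv, by simp [hβ], rfl⟩, u, ?_⟩
  ext q
  constructor
  · rintro ⟨t, hq, -⟩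
    exact Subtype.ext (by simpa using hq)
  · rintro rfl
    exact ⟨(q.2 - c) / β, by simp, by field_simp; ring⟩

theorem IsSlantSphGeodesic.exists_eq_sphGeodesicSet {G : Set (S2 × ℝ)}
    (hG : IsSlantSphGeodesic G) :
    ∃ (u v : S2) (α β c : ℝ), α ≠ 0 ∧ β ≠ 0 ∧ G = sphGeodesicSet u v α β c := by
  obtain ⟨⟨u, v, α, β, c, huv, hαβ, rfl⟩, hH, hV⟩ := hG
  have hβ : β ≠ 0 := by
    rintro rfl
    exact hH (isHorizontalSphGeodesic_sphGeodesicSet_zero c huv (by simpa using hαβ))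
  have hα : α ≠ 0 := by
    rintro rfl
    exact hV (isVerticalSphGeodesic_sphGeodesicSet_zero c huv hβ)
  exact ⟨u, v, α, β, c, hα, hβ, rfl⟩

theorem add_period_mem_sphGeodesicSet {u v : S2} {α : ℝ} (β c : ℝ) (hα : α ≠ 0) {q : S2 × ℝ}
    (hq : q ∈ sphGeodesicSet u v α β c) :
    (q.1, q.2 + β * (2 * Real.pi / α)) ∈ sphGeodesicSet u v α β c := by
  obtain ⟨t, h1, h2⟩ := hq
  have hturn : α * (t + 2 * Real.pi / α) = α * t + 2 * Real.pi := by field_simp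
  refine ⟨t + 2 * Real.pi / α, ?_, by rw [h2]; ring⟩
  rwa [hturn, Real.cos_add_two_pi, Real.sin_add_two_pi]

/-- A vertical geodesic and a slant geodesic of `S² × ℝ` intersect either not at all
or infinitely often. -/
theorem sphere_times_real_vertical_slant_intersection
    (G G' : Set (S2 × ℝ))
    (hG : IsVerticalSphGeodesic G) (hG' : IsSlantSphGeodesic G') :
    G ∩ G' = ∅ ∨ (G ∩ G').Infinite := by
  obtain ⟨-, p, rfl⟩ := hG
  obtain ⟨u, v, α, β, c, hα, hβ, rfl⟩ := hG'.exists_eq_sphGeodesicSet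
  refine Set.eq_empty_or_infinite_of_forall_mem_add_snd _ (T := β * (2 * Real.pi / α))
    (mul_ne_zero hβ (div_ne_zero (by positivity) hα)) ?_
  rintro q ⟨hqp, hq⟩
  exact ⟨hqp, add_period_mem_sphGeodesicSet β c hα hq⟩
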